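/- Let s be a positive integer, let r_1, …, r_s be positive integers, and let n_1 < n_2 < ⋯ < n_s be real numbers with n_1 ≥ 0 and, in case s ≥ 2, n_{s-1} ≤ n_s − 1. Set f(x) = (x − n_1)^{r_1} ⋯ (x − n_s)^{r_s}. Then ρ((x − n_s)·f(x) − 1) ≥ ρ(f(x) − 1), and equality ρ((x − n_s)·f(x) − 1) = ρ(f(x) − 1) holds if and only if s = 1. -/

import Mathlib

/-!
The roots `a i` of `f = ∏ (X - a i) ^ k i` lie in `[0, M]` and include `M`. Hence for `|z| ≥ M`
we have `|f(z)| ≥ f(|z|)`, and `f` is strictly increasing on `(M, ∞)`, so `ρ(f - 1)` is the unique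
`x > M` with `f(x) = 1`; it lies in `(M, M + 1]` because `f(M + 1) ≥ 1`. Likewise `ρ(g - 1) = y`
for `g = (X - M) f`. Since `g(x) = x - M ≤ 1 = g(y)` we get `x ≤ y`, with equality iff
`x = M + 1`, i.e. iff `f(M + 1) = 1`, i.e. iff every root equals `M`.
-/

open Polynomial

/-- `rho p` is the maximum (supremum) of the moduli of the complex roots of the
real polynomial `p`. -/
noncomputable def rho (p : Polynomial ℝ) : ℝ :=
  sSup {t : ℝ | ∃ z : ℂ, (Polynomial.aeval z) p = 0 ∧ ‖z‖ = t}

section ProdSubPow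

variable {ι : Type*} (t : Finset ι) (a : ι → ℝ) (k : ι → ℕ) {M : ℝ}

lemma strictMonoOn_prod_sub_pow (hk : ∃ i ∈ t, k i ≠ 0) (haM : ∀ i ∈ t, a i ≤ M) :
    StrictMonoOn (fun x ↦ ∏ i ∈ t, (x - a i) ^ k i) (Set.Ioi M) := by
  intro x hx y _ hxy
  have hx : ∀ i ∈ t, a i < x := fun i hi ↦ (haM i hi).trans_lt hx
  obtain ⟨j, hj, hkj⟩ := hk
  refine Finset.prod_lt_prod (fun i hi ↦ pow_pos (sub_pos.2 (hx i hi)) _)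
    (fun i hi ↦ pow_le_pow_left₀ (sub_pos.2 (hx i hi)).le (by linarith) _) ⟨j, hj, ?_⟩
  exact pow_lt_pow_left₀ (by linarith) (sub_pos.2 (hx j hj)).le hkj

lemma prod_sub_pow_le_norm_aeval {z : ℂ} (ha : ∀ i ∈ t, 0 ≤ a i ∧ a i ≤ ‖z‖) :
    ∏ i ∈ t, (‖z‖ - a i) ^ k i ≤ ‖aeval z (∏ i ∈ t, (X - C (a i)) ^ k i)‖ := by
  simp only [map_prod, map_pow, map_sub, aeval_X, aeval_C, norm_prod, norm_pow]
  refine Finset.prod_le_prod (fun i hi ↦ pow_nonneg (sub_nonneg.2 (ha i hi).2) _)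
    (fun i hi ↦ pow_le_pow_left₀ (sub_nonneg.2 (ha i hi).2) ?_ _)
  simpa [abs_of_nonneg (ha i hi).1] using norm_sub_norm_le z (a i : ℂ)

lemma exists_prod_sub_pow_eq_one (hM : ∃ i ∈ t, a i = M ∧ k i ≠ 0) (haM : ∀ i ∈ t, a i ≤ M) :
    ∃ x ∈ Set.Ioc M (M + 1), ∏ i ∈ t, (x - a i) ^ k i = 1 := by
  have hcont : Continuous fun x ↦ ∏ i ∈ t, (x - a i) ^ k i := by fun_prop
  have hzero : ∏ i ∈ t, (M - a i) ^ k i = 0 := by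
    obtain ⟨j, hj, hajM, hkj⟩ := hM
    exact Finset.prod_eq_zero hj (by simp [hajM, hkj])
  have hone : 1 ≤ ∏ i ∈ t, (M + 1 - a i) ^ k i :=
    Finset.one_le_prod fun i hi ↦ one_le_pow₀ (by linarith [haM i hi])
  obtain ⟨x, hx, hfx⟩ := intermediate_value_Icc (by linarith : M ≤ M + 1) hcont.continuousOn
    (show (1 : ℝ) ∈ Set.Icc _ _ from ⟨hzero ▸ zero_le_one, hone⟩)
  refine ⟨x, ⟨hx.1.lt_of_ne ?_, hx.2⟩, hfx⟩
  rintro rfl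
  simp [hzero] at hfx

lemma prod_add_one_sub_pow_eq_one_iff (hk : ∀ i ∈ t, k i ≠ 0) (haM : ∀ i ∈ t, a i ≤ M) :
    ∏ i ∈ t, (M + 1 - a i) ^ k i = 1 ↔ ∀ i ∈ t, a i = M := by
  refine ⟨fun h ↦ ?_, fun h ↦ Finset.prod_eq_one fun i hi ↦ by simp [h i hi]⟩
  by_contra! ⟨j, hj, hajM⟩
  refine h.not_gt ?_
  have hlt : 1 < (M + 1 - a j) ^ k j :=
    one_lt_pow₀ (by linarith [(haM j hj).lt_of_ne hajM]) (hk j hj)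
  simpa using Finset.prod_lt_prod (f := fun _ ↦ (1 : ℝ)) (g := fun i ↦ (M + 1 - a i) ^ k i)
    (fun _ _ ↦ one_pos) (fun i hi ↦ one_le_pow₀ (by linarith [haM i hi])) ⟨j, hj, hlt⟩

end ProdSubPow

lemma rho_sub_one_eq {p : ℝ[X]} {x : ℝ} (hx : 0 ≤ x) (hpx : p.eval x = 1)
    (hp : ∀ z : ℂ, x < ‖z‖ → aeval z p ≠ 1) :
    rho (p - 1) = x := by
  set S := {t : ℝ | ∃ z : ℂ, aeval z (p - 1) = 0 ∧ ‖z‖ = t}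
  have hxS : x ∈ S :=
    ⟨x, by simp [← Complex.coe_algebraMap, aeval_algebraMap_apply, hpx], Complex.norm_of_nonneg hx⟩
  have hSx : ∀ t ∈ S, t ≤ x := by
    rintro _ ⟨z, hz, rfl⟩
    by_contra! h
    exact hp z h (sub_eq_zero.1 (by simpa using hz))
  exact le_antisymm (csSup_le ⟨x, hxS⟩ hSx) (le_csSup ⟨x, hSx⟩ hxS)

lemma rho_prod_sub_pow_sub_one {ι : Type*} {t : Finset ι} {a : ι → ℝ} {k : ι → ℕ} {M x : ℝ}
    (hk : ∃ i ∈ t, k i ≠ 0) (ha : ∀ i ∈ t, 0 ≤ a i ∧ a i ≤ M) (hMx : M < x)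
    (hx : ∏ i ∈ t, (x - a i) ^ k i = 1) :
    rho (∏ i ∈ t, (X - C (a i)) ^ k i - 1) = x := by
  have hmono := strictMonoOn_prod_sub_pow t a k hk fun i hi ↦ (ha i hi).2
  obtain ⟨j, hj, -⟩ := hk
  refine rho_sub_one_eq (by linarith [ha j hj]) (by simpa [eval_prod] using hx) fun z hz h1 ↦ ?_
  have hle := prod_sub_pow_le_norm_aeval t a k fun i hi ↦ ⟨(ha i hi).1, by linarith [ha i hi]⟩
  have hlt := hmono hMx (hMx.trans hz) hz
  rw [h1, norm_one] at hle
  simp only [hx] at hlt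
  linarith

lemma rho_X_sub_C_mul_prod_sub_one_ge_and_eq_iff {ι : Type*} {t : Finset ι} {a : ι → ℝ}
    {k : ι → ℕ} {M : ℝ} (hk : ∀ i ∈ t, k i ≠ 0) (ha : ∀ i ∈ t, 0 ≤ a i ∧ a i ≤ M)
    (hM : ∃ i ∈ t, a i = M) :
    rho (∏ i ∈ t, (X - C (a i)) ^ k i - 1) ≤ rho ((X - C M) * ∏ i ∈ t, (X - C (a i)) ^ k i - 1) ∧
      (rho ((X - C M) * ∏ i ∈ t, (X - C (a i)) ^ k i - 1) =
          rho (∏ i ∈ t, (X - C (a i)) ^ k i - 1) ↔ ∀ i ∈ t, a i = M) := by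
  obtain ⟨j, hj, hajM⟩ := hM
  have hMk : ∃ i ∈ t, a i = M ∧ k i ≠ 0 := ⟨j, hj, hajM, hk j hj⟩
  have hk' : ∃ i ∈ t, k i ≠ 0 := ⟨j, hj, hk j hj⟩
  -- `(X - C M) * f` is again a product of the same shape, indexed by `Option ι`
  set b : Option ι → ℝ := fun o ↦ o.elim M a
  set l : Option ι → ℕ := fun o ↦ o.elim 1 k
  have hb : ∀ o ∈ t.insertNone, 0 ≤ b o ∧ b o ≤ M := by
    rintro (_ | i) hi
    exacts [⟨show 0 ≤ M from hajM ▸ (ha j hj).1, le_rfl⟩, ha i (Finset.mem_insertNone.1 hi i rfl)]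
  have hl : ∃ o ∈ t.insertNone, b o = M ∧ l o ≠ 0 :=
    ⟨none, Finset.none_mem_insertNone, rfl, one_ne_zero⟩
  have hl' : ∃ o ∈ t.insertNone, l o ≠ 0 := ⟨none, Finset.none_mem_insertNone, one_ne_zero⟩
  have hg : (X - C M) * ∏ i ∈ t, (X - C (a i)) ^ k i = ∏ o ∈ t.insertNone, (X - C (b o)) ^ l o := by
    simp [Finset.prod_insertNone, b, l]
  have hgeval (x : ℝ) : ∏ o ∈ t.insertNone, (x - b o) ^ l o = (x - M) * ∏ i ∈ t, (x - a i) ^ k i := by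
    simp [Finset.prod_insertNone, b, l]
  obtain ⟨x, hxM, hfx⟩ := exists_prod_sub_pow_eq_one t a k hMk fun i hi ↦ (ha i hi).2
  obtain ⟨y, hyM, hgy⟩ := exists_prod_sub_pow_eq_one _ b l hl fun o ho ↦ (hb o ho).2
  have hf_mono := strictMonoOn_prod_sub_pow t a k hk' fun i hi ↦ (ha i hi).2
  have hg_mono := strictMonoOn_prod_sub_pow _ b l hl' fun o ho ↦ (hb o ho).2
  rw [hg, rho_prod_sub_pow_sub_one hl' hb hyM.1 hgy,
    rho_prod_sub_pow_sub_one hk' ha hxM.1 hfx]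
  have hgx : ∏ o ∈ t.insertNone, (x - b o) ^ l o = x - M := by rw [hgeval, hfx, mul_one]
  refine ⟨(hg_mono.le_iff_le hxM.1 hyM.1).1 (by rw [hgx, hgy]; linarith [hxM.2]), ?_⟩
  calc y = x ↔ 1 = x - M := by rw [← hgx, ← hgy]; exact (hg_mono.injOn.eq_iff hyM.1 hxM.1).symm
    _ ↔ x = M + 1 := by constructor <;> intro <;> linarith
    _ ↔ ∏ i ∈ t, (M + 1 - a i) ^ k i = 1 :=
      (hf_mono.injOn.eq_iff hxM.1 (lt_add_one M)).symm.trans (by rw [hfx, eq_comm])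
    _ ↔ ∀ i ∈ t, a i = M := prod_add_one_sub_pow_eq_one_iff t a k hk fun i hi ↦ (ha i hi).2

/-- With `f(x) = (x - n₁)^{r₁} ⋯ (x - n_s)^{r_s}` as before,
`ρ((x - n_s)·f(x) - 1) ≥ ρ(f(x) - 1)`, with equality if and only if `s = 1`. -/
theorem statement3 (s : ℕ) (hs : 0 < s) (r : Fin s → ℕ) (hr : ∀ i, 0 < r i)
    (n : Fin s → ℝ) (hmono : StrictMono n) (hn0 : 0 ≤ n ⟨0, hs⟩) :
    rho ((X - C (n ⟨s - 1, by omega⟩)) * (∏ i : Fin s, (X - C (n i)) ^ r i) - 1) ≥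
        rho (∏ i : Fin s, (X - C (n i)) ^ r i - 1) ∧
      (rho ((X - C (n ⟨s - 1, by omega⟩)) * (∏ i : Fin s, (X - C (n i)) ^ r i) - 1) =
          rho (∏ i : Fin s, (X - C (n i)) ^ r i - 1) ↔ s = 1) := by
  set L : Fin s := ⟨s - 1, by omega⟩
  have hn : ∀ i ∈ Finset.univ, 0 ≤ n i ∧ n i ≤ n L := fun i _ ↦
    ⟨hn0.trans (hmono.monotone (Fin.mk_le_mk.2 (Nat.zero_le _))),
      hmono.monotone (Fin.mk_le_mk.2 (by omega))⟩
  obtain ⟨hge, heq⟩ := rho_X_sub_C_mul_prod_sub_one_ge_and_eq_iff (fun i _ ↦ (hr i).ne') hn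
    ⟨L, Finset.mem_univ _, rfl⟩
  refine ⟨hge, heq.trans ?_⟩
  simp only [Finset.mem_univ, true_implies, hmono.injective.eq_iff, L, Fin.ext_iff]
  exact ⟨fun h ↦ by have := h ⟨0, hs⟩; simp at this; omega, fun h i ↦ by omega⟩
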